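/- arXiv:2103.16797 — 3 statements merged into one kernel-verified Lean document; each statement's English description precedes it below -/
import Mathlib

section
/- With τ_AB = X_AB^{1/2}((X_A^{-1/2} ω_A X_A^{-1/2}) ⊗ I_B) X_AB^{1/2} for a positive definite state ω_A, and V the isometric extension of the Petz recovery channel, one has V† (τ_AB^{-1} ⊗ Y_{ÂB̂}^T) V = ω_A^{-1} ⊗ Y_Â^T, where Y_Â = Tr_B̂ Y_{ÂB̂}. -/
open Matrix Kronecker ComplexOrder

noncomputable def msqrt {n : Type*} [Fintype n] [DecidableEq n] (A : Matrix n n ℂ) :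
    Matrix n n ℂ := cfc Real.sqrt A

noncomputable def mrpow {n : Type*} [Fintype n] [DecidableEq n] (A : Matrix n n ℂ) (s : ℝ) :
    Matrix n n ℂ := cfc (fun x : ℝ => x ^ s) A

noncomputable def mlog {n : Type*} [Fintype n] [DecidableEq n] (A : Matrix n n ℂ) :
    Matrix n n ℂ := cfc Real.log A

/-- Partial trace over the second tensor factor. -/
noncomputable def ptrB {a b : ℕ} (X : Matrix (Fin a × Fin b) (Fin a × Fin b) ℂ) :
    Matrix (Fin a) (Fin a) ℂ :=
  Matrix.of fun i k => ∑ j, X (i, j) (k, j)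


noncomputable def petzV {a b : ℕ} (S : Matrix (Fin a × Fin b) (Fin a × Fin b) ℂ)
    (Am : Matrix (Fin a) (Fin a) ℂ) :
    Matrix ((Fin a × Fin b) × (Fin a × Fin b)) (Fin a × Fin a) ℂ :=
  Matrix.of fun p q =>
    (S * (Am ⊗ₖ (1 : Matrix (Fin b) (Fin b) ℂ))) p.1 (q.1, p.2.2) *
      (if p.2.1 = q.2 then 1 else 0)

/-!
Write `M = X_AB^{1/2} (X_A^{-1/2} ⊗ I_B)`. The isometry factors as `V = (M ⊗ I) G`, where `G` merely
attaches `|Γ⟩_{BB̂}`, so `V† (N ⊗ Yᵀ) V = G† ((M† N M) ⊗ Yᵀ) G`. For `N = τ_AB⁻¹` the sandwich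
`M† τ_AB⁻¹ M` telescopes to `ω_A⁻¹ ⊗ I_B`, and contracting `I_B ⊗ Yᵀ` against `|Γ⟩_{BB̂}` on both
sides leaves the partial trace `Y_Âᵀ`.
-/

lemma isHermitian_msqrt {n : Type*} [Fintype n] [DecidableEq n] (A : Matrix n n ℂ) :
    (msqrt A).IsHermitian :=
  cfc_predicate _ _

lemma isUnit_msqrt {n : Type*} [Fintype n] [DecidableEq n] {A : Matrix n n ℂ} (hA : A.PosDef) :
    IsUnit (msqrt A) := by
  refine (isUnit_cfc_iff Real.sqrt A (by fun_prop) hA.1).2 ?_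
  intro x hx
  obtain ⟨i, rfl⟩ := hA.1.spectrum_real_eq_range_eigenvalues ▸ hx
  exact (Real.sqrt_pos.2 (hA.eigenvalues_pos i)).ne'

lemma conjTranspose_mul_inv_sandwich_mul {m n R : Type*} [Fintype m] [DecidableEq m] [Fintype n]
    [DecidableEq n] [CommRing R] [StarRing R] {S : Matrix (m × n) (m × n) R} {T : Matrix m m R}
    (hS : S.IsHermitian) (hSu : IsUnit S) (hT : T.IsHermitian) (hTu : IsUnit T)
    (ω : Matrix m m R) :
    (S * (T⁻¹ ⊗ₖ (1 : Matrix n n R)))ᴴ * (S * ((T⁻¹ * ω * T⁻¹) ⊗ₖ (1 : Matrix n n R)) * S)⁻¹ *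
      (S * (T⁻¹ ⊗ₖ (1 : Matrix n n R))) = ω⁻¹ ⊗ₖ (1 : Matrix n n R) := by
  rw [isUnit_iff_isUnit_det] at hSu hTu
  have hT_sandwich : T⁻¹ * (T⁻¹ * ω * T⁻¹)⁻¹ * T⁻¹ = ω⁻¹ := by
    rw [Matrix.mul_inv_rev, Matrix.mul_inv_rev, nonsing_inv_nonsing_inv _ hTu, mul_assoc,
      mul_assoc, nonsing_inv_mul_cancel_left _ _ hTu, mul_assoc, mul_nonsing_inv _ hTu, mul_one]
  calc _ = (T⁻¹ ⊗ₖ (1 : Matrix n n R)) * (S * S⁻¹) *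
          ((T⁻¹ * ω * T⁻¹)⁻¹ ⊗ₖ (1 : Matrix n n R)) * (S⁻¹ * S) * (T⁻¹ ⊗ₖ (1 : Matrix n n R)) := by
        rw [conjTranspose_mul, conjTranspose_kronecker, hT.inv.eq, conjTranspose_one, hS.eq,
          Matrix.mul_inv_rev, Matrix.mul_inv_rev, inv_kronecker, inv_one]
        simp only [mul_assoc]
    _ = (T⁻¹ * (T⁻¹ * ω * T⁻¹)⁻¹ * T⁻¹) ⊗ₖ (1 * 1 * 1 : Matrix n n R) := by
        rw [mul_nonsing_inv _ hSu, nonsing_inv_mul _ hSu, mul_one, mul_one, mul_kronecker_mul,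
          mul_kronecker_mul]
    _ = ω⁻¹ ⊗ₖ (1 : Matrix n n R) := by
        rw [hT_sandwich, mul_one, mul_one]

section PetzIsometry

variable {a b : ℕ}

lemma ptrB_eq_sum_submatrix (X : Matrix (Fin a × Fin b) (Fin a × Fin b) ℂ) :
    ptrB X = ∑ j, X.submatrix (fun i => (i, j)) (fun i => (i, j)) := by
  ext i k
  simp [ptrB, Matrix.sum_apply]

lemma posDef_ptrB (hb : 0 < b) {X : Matrix (Fin a × Fin b) (Fin a × Fin b) ℂ} (hX : X.PosDef) :
    (ptrB X).PosDef := by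
  rw [ptrB_eq_sum_submatrix]
  exact posDef_sum ⟨⟨0, hb⟩, Finset.mem_univ _⟩ fun j _ => hX.submatrix (Prod.mk_left_injective j)

/-- `|i, i'⟩ ↦ ∑ₑ |i, e⟩ ⊗ |i', e⟩`, that is `I_A ⊗ |Γ⟩_{BB̂} ⊗ I_Â` with the factors ordered as
`(A B) (Â B̂)`. -/
def gammaEmbedding (a b : ℕ) : Matrix ((Fin a × Fin b) × (Fin a × Fin b)) (Fin a × Fin a) ℂ :=
  of fun p q => if p.1 = (q.1, p.2.2) ∧ p.2.1 = q.2 then 1 else 0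

lemma petzV_eq_kronecker_one_mul_gammaEmbedding (S : Matrix (Fin a × Fin b) (Fin a × Fin b) ℂ)
    (A : Matrix (Fin a) (Fin a) ℂ) :
    petzV S A = (S * (A ⊗ₖ (1 : Matrix (Fin b) (Fin b) ℂ))) ⊗ₖ
      (1 : Matrix (Fin a × Fin b) (Fin a × Fin b) ℂ) * gammaEmbedding a b := by
  ext ⟨x, d, e⟩ ⟨i, i'⟩
  simp only [petzV, gammaEmbedding, mul_apply, kroneckerMap_apply, of_apply, one_apply,
    Fintype.sum_prod_type, Prod.mk.injEq, ite_and, mul_ite, mul_one, mul_zero, Finset.sum_ite_eq,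
    Finset.sum_ite_eq', Finset.mem_univ, if_true, Finset.sum_ite_irrel, Finset.sum_const_zero]

lemma conjTranspose_gammaEmbedding_mul_kronecker_mul (Z : Matrix (Fin a) (Fin a) ℂ)
    (Y : Matrix (Fin a × Fin b) (Fin a × Fin b) ℂ) :
    (gammaEmbedding a b)ᴴ * ((Z ⊗ₖ (1 : Matrix (Fin b) (Fin b) ℂ)) ⊗ₖ Yᵀ) * gammaEmbedding a b =
      Z ⊗ₖ (ptrB Y)ᵀ := by
  ext ⟨i, i'⟩ ⟨k, k'⟩
  simp only [gammaEmbedding, mul_apply, conjTranspose_apply, kroneckerMap_apply, transpose_apply,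
    of_apply, one_apply, Fintype.sum_prod_type, Prod.mk.injEq, ite_and, mul_ite, ite_mul, mul_one,
    mul_zero, zero_mul, one_mul, Finset.sum_ite_eq, Finset.sum_ite_eq', Finset.mem_univ, if_true,
    Finset.sum_ite_irrel, Finset.sum_const_zero, apply_ite star, star_one, star_zero, ptrB,
    Finset.mul_sum]

lemma conjTranspose_petzV_mul_kronecker_mul_petzV
    {S N Y : Matrix (Fin a × Fin b) (Fin a × Fin b) ℂ} {A Z : Matrix (Fin a) (Fin a) ℂ}
    (h : (S * (A ⊗ₖ (1 : Matrix (Fin b) (Fin b) ℂ)))ᴴ * N *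
      (S * (A ⊗ₖ (1 : Matrix (Fin b) (Fin b) ℂ))) = Z ⊗ₖ 1) :
    (petzV S A)ᴴ * (N ⊗ₖ Yᵀ) * petzV S A = Z ⊗ₖ (ptrB Y)ᵀ := by
  rw [petzV_eq_kronecker_one_mul_gammaEmbedding, conjTranspose_mul, conjTranspose_kronecker,
    conjTranspose_one, ← conjTranspose_gammaEmbedding_mul_kronecker_mul, ← h]
  generalize S * (A ⊗ₖ (1 : Matrix (Fin b) (Fin b) ℂ)) = M
  have hsplit : (Mᴴ * N * M) ⊗ₖ Yᵀ = (Mᴴ ⊗ₖ 1) * (N ⊗ₖ Yᵀ) * (M ⊗ₖ 1) := by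
    rw [← mul_kronecker_mul, ← mul_kronecker_mul, one_mul, mul_one]
  rw [hsplit]
  simp only [Matrix.mul_assoc]

end PetzIsometry

theorem petzV_conjugation_general (a b : ℕ)
    (XAB YAB : Matrix (Fin a × Fin b) (Fin a × Fin b) ℂ)
    (hXAB : XAB.PosDef)
    (ω : Matrix (Fin a) (Fin a) ℂ) :
    (petzV (msqrt XAB) ((msqrt (ptrB XAB))⁻¹))ᴴ *
      ((msqrt XAB *
          ((((msqrt (ptrB XAB))⁻¹ * ω * (msqrt (ptrB XAB))⁻¹) ⊗ₖ
            (1 : Matrix (Fin b) (Fin b) ℂ))) * msqrt XAB)⁻¹ ⊗ₖ YABᵀ) *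
      petzV (msqrt XAB) ((msqrt (ptrB XAB))⁻¹) =
      ω⁻¹ ⊗ₖ (ptrB YAB)ᵀ := by
  refine conjTranspose_petzV_mul_kronecker_mul_petzV ?_
  obtain rfl | hb := Nat.eq_zero_or_pos b
  · exact Subsingleton.elim _ _
  exact conjTranspose_mul_inv_sandwich_mul (isHermitian_msqrt _) (isUnit_msqrt hXAB)
    (isHermitian_msqrt _) (isUnit_msqrt (posDef_ptrB hb hXAB)) ω

/-- With `τ_AB` the output of the Petz recovery channel on `ω_A`, conjugating
`τ_AB⁻¹ ⊗ Y_{ÂB̂}ᵀ` by the isometric extension `V` gives `ω_A⁻¹ ⊗ Y_Âᵀ`. -/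
theorem petzV_conjugation (a b : ℕ)
    (XAB YAB : Matrix (Fin a × Fin b) (Fin a × Fin b) ℂ)
    (hXAB : XAB.PosDef) (hYAB : YAB.PosDef)
    (ω : Matrix (Fin a) (Fin a) ℂ) (hω : ω.PosDef) (hω1 : ω.trace = 1) :
    (petzV (msqrt XAB) ((msqrt (ptrB XAB))⁻¹))ᴴ *
      ((msqrt XAB *
          ((((msqrt (ptrB XAB))⁻¹ * ω * (msqrt (ptrB XAB))⁻¹) ⊗ₖ
            (1 : Matrix (Fin b) (Fin b) ℂ))) * msqrt XAB)⁻¹ ⊗ₖ YABᵀ) *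
      petzV (msqrt XAB) ((msqrt (ptrB XAB))⁻¹) =
      ω⁻¹ ⊗ₖ (ptrB YAB)ᵀ :=
  petzV_conjugation_general a b XAB YAB hXAB ω
end

section
/- If f : (0,∞) → ℝ is operator convex, V is an isometry between finite-dimensional inner product spaces, A is a positive definite operator on the codomain, and ψ is any vector in the domain, then ⟨ψ| V† f(A) V |ψ⟩ ≥ ⟨ψ| f(V† A V) |ψ⟩ (a consequence of the operator Jensen inequality). -/
/-!
With `Q = 1 - V Vᴴ`, the block matrix `U = [[Q, V], [Vᴴ, 0]]` on `m ⊕ n` is a self-adjoint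
unitary, and for `B = diag(A, 1)` the lower-right block of `U B U` is `Vᴴ A V`, while that of
`f(U B U) = U diag(f A, f 1) U` is `Vᴴ f(A) V`. So it suffices to show `f(M₂₂) ≤ f(M)₂₂` for
positive definite `M` on `m ⊕ n`. With `S = diag(1, -1)`, the midpoint of `M` and `S M S` is the
block-diagonal part of `M`, on which `f` acts blockwise; midpoint convexity of `f` then compares
`f(M₂₂)` with the lower-right block of `(f(M) + S f(M) S) / 2`, which is `f(M)₂₂`.

Functional calculus commutes with reindexing, unitary conjugation and block diagonals because for a
matrix `M`, `cfc f M` is a polynomial in `M`: the one interpolating `f` on the spectrum.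
-/

open Matrix ComplexOrder

/-- The Loewner order on complex matrices. -/
def loewnerLE {n : Type*} [Fintype n] (A B : Matrix n n ℂ) : Prop := (B - A).PosSemidef

open Polynomial

namespace Matrix

def fromBlocksZeroZeroAlgHom (R α m n : Type*) [Fintype m] [DecidableEq m] [Fintype n]
    [DecidableEq n] [CommSemiring R] [Semiring α] [Algebra R α] :
    Matrix m m α × Matrix n n α →ₐ[R] Matrix (m ⊕ n) (m ⊕ n) α where
  toFun X := fromBlocks X.1 0 0 X.2
  map_one' := fromBlocks_one
  map_mul' X Y := by simp [fromBlocks_multiply]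
  map_zero' := fromBlocks_zero
  map_add' X Y := by simp [fromBlocks_add]
  commutes' r := by simp [algebraMap_eq_diagonal, fromBlocks_diagonal]

variable {𝕜 : Type*} [RCLike 𝕜] {m n : Type*} [Fintype m] [Fintype n]

theorem PosDef.fromBlocks_zero_zero {X : Matrix m m 𝕜} {Y : Matrix n n 𝕜} (hX : X.PosDef)
    (hY : Y.PosDef) : (fromBlocks X 0 0 Y).PosDef := by
  refine .of_dotProduct_mulVec_pos (hX.isHermitian.fromBlocks (by simp) hY.isHermitian)
    fun v hv ↦ ?_
  obtain ⟨x, y, rfl⟩ : ∃ x y, v = Sum.elim x y := ⟨_, _, (Sum.elim_comp_inl_inr v).symm⟩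
  simp only [fromBlocks_mulVec, Function.star_sumElim, sumElim_dotProduct_sumElim, zero_mulVec,
    Sum.elim_comp_inl, Sum.elim_comp_inr, add_zero, zero_add]
  by_cases hx : x = 0
  · subst hx
    exact add_pos_of_nonneg_of_pos (hX.posSemidef.dotProduct_mulVec_nonneg _)
      (hY.dotProduct_mulVec_pos fun hy ↦ hv (by simp [hy]))
  · exact add_pos_of_pos_of_nonneg (hX.dotProduct_mulVec_pos hx)
      (hY.posSemidef.dotProduct_mulVec_nonneg _)

variable [DecidableEq m] [DecidableEq n]

theorem IsHermitian.cfc_eq_aeval_interpolate {M : Matrix n n 𝕜} (hM : M.IsHermitian) (f : ℝ → ℝ)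
    {s : Finset ℝ} (hs : spectrum ℝ M ⊆ s) :
    cfc f M = aeval M (Lagrange.interpolate s id f) := by
  rw [← cfc_polynomial _ M hM.isSelfAdjoint]
  exact cfc_congr fun x hx ↦ (Lagrange.eval_interpolate_at_node f (Set.injOn_id _) (hs hx)).symm

theorem IsHermitian.cfc_algHom_apply {F : Type*} [FunLike F (Matrix m m 𝕜) (Matrix n n 𝕜)]
    [AlgHomClass F ℝ (Matrix m m 𝕜) (Matrix n n 𝕜)] {M : Matrix m m 𝕜} (hM : M.IsHermitian)
    (φ : F) (hφM : (φ M).IsHermitian) (f : ℝ → ℝ) :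
    cfc f (φ M) = φ (cfc f M) := by
  have hs : spectrum ℝ M ⊆ M.finite_real_spectrum.toFinset := by simp
  rw [hM.cfc_eq_aeval_interpolate f hs,
    hφM.cfc_eq_aeval_interpolate f ((AlgHom.spectrum_apply_subset φ M).trans hs),
    aeval_algHom_apply]

theorem IsHermitian.cfc_unitary_conj {M : Matrix n n 𝕜} (hM : M.IsHermitian)
    (u : unitary (Matrix n n 𝕜)) (f : ℝ → ℝ) :
    cfc f ((u : Matrix n n 𝕜) * M * star (u : Matrix n n 𝕜)) =
      u * cfc f M * star (u : Matrix n n 𝕜) :=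
  hM.cfc_algHom_apply (Unitary.conjStarAlgAut ℝ _ u) (hM.isSelfAdjoint.conjugate _) f

theorem IsHermitian.cfc_reindex {M : Matrix m m 𝕜} (hM : M.IsHermitian) (e : m ≃ n)
    (f : ℝ → ℝ) : cfc f (Matrix.reindex e e M) = Matrix.reindex e e (cfc f M) :=
  hM.cfc_algHom_apply (reindexAlgEquiv ℝ 𝕜 e) (hM.submatrix _) f

theorem cfc_fromBlocks_zero_zero {X : Matrix m m 𝕜} {Y : Matrix n n 𝕜} (hX : X.IsHermitian)
    (hY : Y.IsHermitian) (f : ℝ → ℝ) :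
    cfc f (fromBlocks X 0 0 Y) = fromBlocks (cfc f X) 0 0 (cfc f Y) := by
  have hD : (fromBlocks X 0 0 Y).IsHermitian := hX.fromBlocks (by simp) hY
  set s := X.finite_real_spectrum.toFinset ∪ Y.finite_real_spectrum.toFinset ∪
    (fromBlocks X 0 0 Y).finite_real_spectrum.toFinset
  rw [hD.cfc_eq_aeval_interpolate f (s := s) fun x hx ↦ by simp [s, hx],
    hX.cfc_eq_aeval_interpolate f (s := s) fun x hx ↦ by simp [s, hx],
    hY.cfc_eq_aeval_interpolate f (s := s) fun x hx ↦ by simp [s, hx]]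
  exact (aeval_algHom_apply (fromBlocksZeroZeroAlgHom ℝ 𝕜 m n) (X, Y) _).trans
    (congrArg _ (aeval_prod_apply _ _))

end Matrix

theorem IsSelfAdjoint.mem_unitary_of_mul_self_eq_one {R : Type*} [Monoid R] [StarMul R] {u : R}
    (hu : IsSelfAdjoint u) (h : u * u = 1) : u ∈ unitary R :=
  Unitary.mem_iff.2 ⟨by rw [hu.star_eq, h], by rw [hu.star_eq, h]⟩

theorem loewnerLE_reindex_iff {m n : Type*} [Fintype m] [Fintype n] (e : m ≃ n)
    {X Y : Matrix m m ℂ} : loewnerLE (reindex e e X) (reindex e e Y) ↔ loewnerLE X Y :=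
  posSemidef_submatrix_equiv (M := Y - X) e.symm

def IsOperatorConvex (f : ℝ → ℝ) (ι : Type*) [Fintype ι] [DecidableEq ι] : Prop :=
  ∀ A B : Matrix ι ι ℂ, A.PosDef → B.PosDef → ∀ t : ℝ, 0 ≤ t → t ≤ 1 →
    loewnerLE (cfc f (t • A + (1 - t) • B)) (t • cfc f A + (1 - t) • cfc f B)

namespace IsOperatorConvex

variable {f : ℝ → ℝ}

theorem of_equiv {ι κ : Type*} [Fintype ι] [DecidableEq ι] [Fintype κ] [DecidableEq κ]
    (hf : IsOperatorConvex f κ) (e : ι ≃ κ) : IsOperatorConvex f ι := by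
  intro A B hA hB t ht₀ ht₁
  have hAB : (t • A + (1 - t) • B).IsHermitian :=
    (hA.isHermitian.smul (.all t)).add (hB.isHermitian.smul (.all _))
  have hlin : ∀ X Y : Matrix ι ι ℂ,
      t • reindex e e X + (1 - t) • reindex e e Y = reindex e e (t • X + (1 - t) • Y) := by
    intro X Y; ext; simp
  have h := hf (reindex e e A) (reindex e e B) (hA.submatrix e.symm.injective)
    (hB.submatrix e.symm.injective) t ht₀ ht₁
  rwa [hA.isHermitian.cfc_reindex, hB.isHermitian.cfc_reindex, hlin, hlin, hAB.cfc_reindex,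
    loewnerLE_reindex_iff] at h

theorem cfc_toBlocks₂₂_le {a b : Type*} [Fintype a] [DecidableEq a] [Fintype b] [DecidableEq b]
    (hf : IsOperatorConvex f (a ⊕ b)) {M : Matrix (a ⊕ b) (a ⊕ b) ℂ} (hM : M.PosDef) :
    loewnerLE (cfc f M.toBlocks₂₂) (cfc f M).toBlocks₂₂ := by
  set S : Matrix (a ⊕ b) (a ⊕ b) ℂ := fromBlocks 1 0 0 (-1)
  have hS_sa : IsSelfAdjoint S := by
    simp [S, IsSelfAdjoint, star_eq_conjTranspose, fromBlocks_conjTranspose]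
  have hS : S ∈ unitary _ := hS_sa.mem_unitary_of_mul_self_eq_one
    (by simp [S, fromBlocks_multiply, ← fromBlocks_one])
  have hconj : ∀ X, S * X * star S =
      fromBlocks X.toBlocks₁₁ (-X.toBlocks₁₂) (-X.toBlocks₂₁) X.toBlocks₂₂ := by
    intro X
    conv_lhs => rw [← fromBlocks_toBlocks X]
    simp [hS_sa.star_eq, S, fromBlocks_multiply]
  have hSM : (S * M * star S).PosDef :=
    (IsUnit.posDef_star_right_conjugate_iff (Unitary.isUnit_coe (U := ⟨S, hS⟩))).2 hM
  have hmid : (1 / 2 : ℝ) • M + (1 - 1 / 2 : ℝ) • (S * M * star S) =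
      fromBlocks M.toBlocks₁₁ 0 0 M.toBlocks₂₂ := by
    rw [hconj]
    nth_rw 1 [← fromBlocks_toBlocks M]
    simp only [fromBlocks_smul, fromBlocks_add, fromBlocks_inj]
    refine ⟨?_, ?_, ?_, ?_⟩ <;> module
  have h₁₁ : M.toBlocks₁₁.IsHermitian := hM.isHermitian.submatrix Sum.inl
  have h₂₂ : M.toBlocks₂₂.IsHermitian := hM.isHermitian.submatrix Sum.inr
  have h := hf M _ hM hSM (1 / 2) (by norm_num) (by norm_num)
  rw [hmid, cfc_fromBlocks_zero_zero h₁₁ h₂₂, hM.isHermitian.cfc_unitary_conj ⟨S, hS⟩,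
    hconj] at h
  nth_rw 1 [← fromBlocks_toBlocks (cfc f M)] at h
  simp only [loewnerLE, sub_eq_add_neg, fromBlocks_smul, fromBlocks_neg, fromBlocks_add] at h
  have h₂₂ : ((1 / 2 : ℝ) • (cfc f M).toBlocks₂₂ + (1 - 1 / 2 : ℝ) • (cfc f M).toBlocks₂₂ +
      -cfc f M.toBlocks₂₂).PosSemidef := h.submatrix Sum.inr
  rwa [← add_smul, add_sub_cancel, one_smul, ← sub_eq_add_neg] at h₂₂

theorem cfc_conjTranspose_mul_mul_le {m n : Type*} [Fintype m] [DecidableEq m] [Fintype n]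
    [DecidableEq n] (hf : IsOperatorConvex f (m ⊕ n)) {V : Matrix m n ℂ} (hV : Vᴴ * V = 1)
    {A : Matrix m m ℂ} (hA : A.PosDef) :
    loewnerLE (cfc f (Vᴴ * A * V)) (Vᴴ * cfc f A * V) := by
  set U : Matrix (m ⊕ n) (m ⊕ n) ℂ := fromBlocks (1 - V * Vᴴ) V Vᴴ 0
  have hU_sa : IsSelfAdjoint U := by
    simp [U, IsSelfAdjoint, star_eq_conjTranspose, fromBlocks_conjTranspose]
  have hVV : V * Vᴴ * V = V := by rw [Matrix.mul_assoc, hV, Matrix.mul_one]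
  have hU : U ∈ unitary _ := hU_sa.mem_unitary_of_mul_self_eq_one <| by
    rw [← fromBlocks_one]
    simp only [U, fromBlocks_multiply, Matrix.mul_sub, Matrix.sub_mul, Matrix.mul_one,
      Matrix.one_mul, ← Matrix.mul_assoc, hVV, hV, Matrix.mul_zero, Matrix.zero_mul, add_zero,
      sub_self, sub_zero, sub_add_cancel]
  set B : Matrix (m ⊕ n) (m ⊕ n) ℂ := fromBlocks A 0 0 1
  have hB : B.PosDef := hA.fromBlocks_zero_zero PosDef.one
  have hM : (U * B * star U).PosDef :=
    (IsUnit.posDef_star_right_conjugate_iff (Unitary.isUnit_coe (U := ⟨U, hU⟩))).2 hB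
  have h := hf.cfc_toBlocks₂₂_le hM
  rw [hB.isHermitian.cfc_unitary_conj ⟨U, hU⟩,
    cfc_fromBlocks_zero_zero hA.isHermitian isHermitian_one] at h
  simpa [U, B, hU_sa.star_eq, fromBlocks_multiply] using h

end IsOperatorConvex

theorem operator_jensen_vector_form_general (f : ℝ → ℝ)
    (hf_opconvex : ∀ (k : ℕ) (A B : Matrix (Fin k) (Fin k) ℂ), A.PosDef → B.PosDef →
      ∀ t : ℝ, 0 ≤ t → t ≤ 1 →
        loewnerLE (cfc f (t • A + (1 - t) • B)) (t • cfc f A + (1 - t) • cfc f B))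
    (m n : ℕ) (V : Matrix (Fin m) (Fin n) ℂ) (hV : Vᴴ * V = 1)
    (A : Matrix (Fin m) (Fin m) ℂ) (hA : A.PosDef) (ψ : Fin n → ℂ) :
    (star ψ ⬝ᵥ (cfc f (Vᴴ * A * V)).mulVec ψ).re ≤
      (star ψ ⬝ᵥ (Vᴴ * cfc f A * V).mulVec ψ).re := by
  have hf : IsOperatorConvex f (Fin m ⊕ Fin n) :=
    IsOperatorConvex.of_equiv (hf_opconvex (m + n)) finSumFinEquiv
  have hψ := (hf.cfc_conjTranspose_mul_mul_le hV hA).dotProduct_mulVec_nonneg ψ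
  rw [sub_mulVec, dotProduct_sub, sub_nonneg] at hψ
  exact (Complex.le_def.1 hψ).1

/-- Consequence of the operator Jensen inequality: for `f` operator convex on `(0,∞)`,
an isometry `V`, a positive definite `A`, and any vector `ψ`,
`⟨ψ| f(V†AV) |ψ⟩ ≤ ⟨ψ| V† f(A) V |ψ⟩`. -/
theorem operator_jensen_vector_form (f : ℝ → ℝ) (hf_cont : ContinuousOn f (Set.Ioi 0))
    (hf_opconvex : ∀ (k : ℕ) (A B : Matrix (Fin k) (Fin k) ℂ), A.PosDef → B.PosDef →
      ∀ t : ℝ, 0 ≤ t → t ≤ 1 →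
        loewnerLE (cfc f (t • A + (1 - t) • B)) (t • cfc f A + (1 - t) • cfc f B))
    (m n : ℕ) (V : Matrix (Fin m) (Fin n) ℂ) (hV : Vᴴ * V = 1)
    (A : Matrix (Fin m) (Fin m) ℂ) (hA : A.PosDef) (ψ : Fin n → ℂ) :
    (star ψ ⬝ᵥ (cfc f (Vᴴ * A * V)).mulVec ψ).re ≤
      (star ψ ⬝ᵥ (Vᴴ * cfc f A * V).mulVec ψ).re :=
  operator_jensen_vector_form_general f hf_opconvex m n V hV A hA ψ
end

section
/- (Hölder duality, reverse form) For α ∈ [1/2, 1) and positive definite matrix Z on ℂ^d, the infimum over positive definite density matrices τ of Tr{Z τ^{(α-1)/α}} equals ‖Z‖_α = (Tr{Z^α})^{1/α}, with the infimum attained at τ = Z^α / Tr{Z^α}. -/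
open Matrix Kronecker ComplexOrder

/-!
Put `β = (α - 1) / α ≤ 0`, diagonalize `Z = ∑ xᵢ uᵢ uᵢ*` and let `pᵢ = ⟨uᵢ, τ uᵢ⟩`, a probability
vector with positive entries. As `t ↦ t ^ β` is convex on `(0, ∞)`, Jensen's inequality for the
spectral measure of `τ` in the state `uᵢ` gives `⟨uᵢ, τ ^ β uᵢ⟩ ≥ pᵢ ^ β`, so
`Tr{Z τ ^ β} ≥ ∑ xᵢ pᵢ ^ β`. Jensen's inequality for the convex map `t ↦ t ^ (1 / α)` with
weights `pᵢ` at the points `xᵢ ^ α / pᵢ` then gives `∑ xᵢ pᵢ ^ β ≥ (∑ xᵢ ^ α) ^ (1 / α)`.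
For `τ = Z ^ α / Tr{Z ^ α}` both steps are equalities, since `τ` commutes with `Z`.
-/

theorem convexOn_rpow_of_nonpos {p : ℝ} (hp : p ≤ 0) :
    ConvexOn ℝ (Set.Ioi 0) fun x : ℝ ↦ x ^ p := by
  refine ⟨convex_Ioi 0, fun x hx y hy a b ha hb hab ↦ ?_⟩
  have hlog := strictConcaveOn_log_Ioi.concaveOn.2 hx hy ha hb hab
  have hxy : 0 < a • x + b • y := (convex_Ioi 0) hx hy ha hb hab
  simp only [smul_eq_mul] at hlog hxy ⊢
  rw [Real.rpow_def_of_pos hxy, Real.rpow_def_of_pos hx, Real.rpow_def_of_pos hy]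
  calc Real.exp (Real.log (a * x + b * y) * p)
      ≤ Real.exp (a * (Real.log x * p) + b * (Real.log y * p)) := by
        gcongr; nlinarith
    _ ≤ a * Real.exp (Real.log x * p) + b * Real.exp (Real.log y * p) :=
        convexOn_exp.2 trivial trivial ha hb hab

theorem rpow_sum_rpow_le_sum_mul_rpow {ι : Type*} (s : Finset ι) {x p : ι → ℝ}
    (hx : ∀ i ∈ s, 0 ≤ x i) (hp : ∀ i ∈ s, 0 < p i) (hp1 : ∑ i ∈ s, p i = 1)
    {α : ℝ} (hα0 : 0 < α) (hα1 : α ≤ 1) :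
    (∑ i ∈ s, x i ^ α) ^ (1 / α) ≤ ∑ i ∈ s, x i * p i ^ ((α - 1) / α) := by
  have hjensen := Real.rpow_arith_mean_le_arith_mean_rpow s p (fun i ↦ x i ^ α / p i)
    (fun i hi ↦ (hp i hi).le) hp1
    (fun i hi ↦ div_nonneg (Real.rpow_nonneg (hx i hi) α) (hp i hi).le) (one_le_one_div hα0 hα1)
  have hmean : ∀ i ∈ s, p i * (x i ^ α / p i) = x i ^ α := fun i hi ↦
    mul_div_cancel₀ _ (hp i hi).ne'
  have hpow : ∀ i ∈ s, p i * (x i ^ α / p i) ^ (1 / α) = x i * p i ^ ((α - 1) / α) := by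
    intro i hi
    have hpi := hp i hi
    rw [Real.div_rpow (Real.rpow_nonneg (hx i hi) α) hpi.le, one_div,
      Real.rpow_rpow_inv (hx i hi) hα0.ne', show (α - 1) / α = 1 - α⁻¹ by field_simp,
      Real.rpow_sub hpi, Real.rpow_one]
    field_simp
  rwa [Finset.sum_congr rfl hmean, Finset.sum_congr rfl hpow] at hjensen

theorem sum_mul_normalized_rpow_rpow {ι : Type*} (s : Finset ι) {x : ι → ℝ}
    (hx : ∀ i ∈ s, 0 ≤ x i) {α : ℝ} (hα : α ≠ 0) :
    ∑ i ∈ s, x i * ((∑ j ∈ s, x j ^ α)⁻¹ * x i ^ α) ^ ((α - 1) / α) =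
      (∑ i ∈ s, x i ^ α) ^ (1 / α) := by
  set c := ∑ j ∈ s, x j ^ α
  have hc : 0 ≤ c := Finset.sum_nonneg fun i hi ↦ Real.rpow_nonneg (hx i hi) α
  have hexp : 1 + α * ((α - 1) / α) = α := by field_simp; ring
  have hterm : ∀ i ∈ s,
      x i * (c⁻¹ * x i ^ α) ^ ((α - 1) / α) = (c ^ ((α - 1) / α))⁻¹ * x i ^ α := by
    intro i hi
    rw [Real.mul_rpow (inv_nonneg.2 hc) (Real.rpow_nonneg (hx i hi) α), Real.inv_rpow hc,
      ← Real.rpow_mul (hx i hi), mul_left_comm, ← Real.rpow_one_add' (hx i hi) (by rwa [hexp]),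
      hexp]
  have hexp' : 1 - (α - 1) / α = 1 / α := by field_simp; ring
  rw [Finset.sum_congr rfl hterm, ← Finset.mul_sum, inv_mul_eq_div, ← hexp',
    Real.rpow_sub' hc (by rw [hexp']; simpa using hα), Real.rpow_one]

namespace Matrix

variable {n : Type*} [Fintype n] [DecidableEq n]

lemma sum_normSq_apply_eq_one_of_mem_unitary {V : Matrix n n ℂ} (hV : V ∈ unitary (Matrix n n ℂ))
    (i : n) :
    ∑ k, Complex.normSq (V k i) = 1 := by
  have h : (star V * V) i i = (1 : Matrix n n ℂ) i i := by rw [Unitary.star_mul_self_of_mem hV]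
  rw [mul_apply, one_apply_eq] at h
  have hC : ((∑ k, Complex.normSq (V k i) : ℝ) : ℂ) = 1 := by
    push_cast
    simpa [Complex.normSq_eq_conj_mul_self] using h
  exact_mod_cast hC

namespace IsHermitian

variable {A : Matrix n n ℂ} (hA : A.IsHermitian)

lemma trace_cfc (f : ℝ → ℝ) : (cfc f A).trace = ∑ i, (f (hA.eigenvalues i) : ℂ) := by
  rw [hA.cfc_eq f, IsHermitian.cfc, Unitary.conjStarAlgAut_apply, trace_mul_cycle,
    Unitary.star_mul_self_of_mem (SetLike.coe_mem _), one_mul, trace_diagonal]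
  rfl

lemma trace_mul_eq_sum_eigenvalues_mul (M : Matrix n n ℂ) :
    (A * M).trace = ∑ i, (hA.eigenvalues i : ℂ) *
      (star (hA.eigenvectorUnitary : Matrix n n ℂ) * M * hA.eigenvectorUnitary) i i := by
  conv_lhs => rw [hA.spectral_theorem, Unitary.conjStarAlgAut_apply]
  rw [trace_mul_cycle, trace_mul_cycle, ← mul_assoc, trace_mul_comm]
  simp [trace, diagonal_mul, mul_assoc]

lemma star_mul_cfc_mul_apply_self (f : ℝ → ℝ) (W : Matrix n n ℂ) (i : n) :
    (star W * cfc f A * W) i i = ∑ k, (f (hA.eigenvalues k) *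
      Complex.normSq ((star (hA.eigenvectorUnitary : Matrix n n ℂ) * W) k i) : ℝ) := by
  set V := star (hA.eigenvectorUnitary : Matrix n n ℂ) * W
  have hconj : star W * cfc f A * W =
      star V * diagonal (fun k ↦ (f (hA.eigenvalues k) : ℂ)) * V := by
    rw [hA.cfc_eq f, IsHermitian.cfc, Unitary.conjStarAlgAut_apply]
    simp only [V, star_mul, star_star, mul_assoc]
    rfl
  rw [hconj, mul_apply]
  push_cast
  refine Finset.sum_congr rfl fun k _ ↦ ?_
  rw [mul_diagonal, Complex.normSq_eq_conj_mul_self, star_apply, Complex.star_def]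
  ring

end IsHermitian

theorem _root_.ConvexOn.map_diag_conj_le_diag_conj_cfc
    {f : ℝ → ℝ} {s : Set ℝ} (hf : ConvexOn ℝ s f) {B : Matrix n n ℂ} (hB : B.IsHermitian)
    (hs : ∀ k, hB.eigenvalues k ∈ s) {W : Matrix n n ℂ} (hW : W ∈ unitary (Matrix n n ℂ))
    (i : n) : f ((star W * B * W) i i).re ≤ ((star W * cfc f B * W) i i).re := by
  set V := star (hB.eigenvectorUnitary : Matrix n n ℂ) * W
  have hV : V ∈ unitary (Matrix n n ℂ) :=
    Submonoid.mul_mem _ (Unitary.star_mem (SetLike.coe_mem _)) hW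
  have hB_diag := hB.star_mul_cfc_mul_apply_self id W i
  rw [cfc_id ℝ B] at hB_diag
  rw [hB_diag, hB.star_mul_cfc_mul_apply_self f W i, Complex.ofReal_re, Complex.ofReal_re]
  simpa only [id, smul_eq_mul, mul_comm] using
    hf.map_sum_le (fun k _ ↦ Complex.normSq_nonneg _)
      (sum_normSq_apply_eq_one_of_mem_unitary hV i) (fun k _ ↦ hs k)

namespace PosSemidef

theorem rpow_trace_rpow_le_trace_mul_rpow {Z τ : Matrix n n ℂ} (hZ : Z.PosSemidef)
    (hτ : τ.PosDef) (hτ1 : τ.trace = 1) {α : ℝ} (hα0 : 0 < α) (hα1 : α ≤ 1) :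
    (mrpow Z α).trace.re ^ (1 / α) ≤ (Z * mrpow τ ((α - 1) / α)).trace.re := by
  set β := (α - 1) / α
  set x := hZ.isHermitian.eigenvalues
  set U : Matrix n n ℂ := (hZ.isHermitian.eigenvectorUnitary : Matrix n n ℂ)
  have hU : U ∈ unitary (Matrix n n ℂ) := SetLike.coe_mem _
  set p : n → ℝ := fun i ↦ ((star U * τ * U) i i).re
  have hp_pos : ∀ i, 0 < p i := fun i ↦ (Complex.pos_iff.1
    ((IsUnit.posDef_star_left_conjugate_iff Unitary.isUnit_coe).2 hτ).diag_pos).1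
  have hp_sum : ∑ i, p i = 1 := by
    rw [show ∑ i, p i = (star U * τ * U).trace.re by simp [p, trace, Complex.re_sum],
      trace_mul_cycle, Unitary.mul_star_self_of_mem hU, one_mul, hτ1, Complex.one_re]
  have hβ : β ≤ 0 := div_nonpos_of_nonpos_of_nonneg (by linarith) hα0.le
  have hjensen : ∀ i, p i ^ β ≤ ((star U * mrpow τ β * U) i i).re :=
    (convexOn_rpow_of_nonpos hβ).map_diag_conj_le_diag_conj_cfc hτ.1 hτ.eigenvalues_pos hU
  calc (mrpow Z α).trace.re ^ (1 / α) = (∑ i, x i ^ α) ^ (1 / α) := by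
        rw [mrpow, hZ.isHermitian.trace_cfc, ← Complex.ofReal_sum, Complex.ofReal_re]
    _ ≤ ∑ i, x i * p i ^ β :=
        rpow_sum_rpow_le_sum_mul_rpow _ (fun i _ ↦ hZ.eigenvalues_nonneg i)
          (fun i _ ↦ hp_pos i) hp_sum hα0 hα1
    _ ≤ ∑ i, x i * ((star U * mrpow τ β * U) i i).re := by
        gcongr with i
        · exact hZ.eigenvalues_nonneg i
        · exact hjensen i
    _ = (Z * mrpow τ β).trace.re := by
        simp only [hZ.isHermitian.trace_mul_eq_sum_eigenvalues_mul, Complex.re_sum,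
          Complex.re_ofReal_mul, x, U]

theorem trace_mul_normalized_rpow_rpow {Z : Matrix n n ℂ} (hZ : Z.PosSemidef) {α : ℝ}
    (hα : α ≠ 0) :
    (Z * mrpow ((mrpow Z α).trace⁻¹ • mrpow Z α) ((α - 1) / α)).trace.re =
      (mrpow Z α).trace.re ^ (1 / α) := by
  set c := ∑ i, hZ.isHermitian.eigenvalues i ^ α
  have hZsa : IsSelfAdjoint Z := hZ.isHermitian.isSelfAdjoint
  have hspec : (spectrum ℝ Z).Finite := Z.finite_real_spectrum
  have htrace : (mrpow Z α).trace = c := by rw [mrpow, hZ.isHermitian.trace_cfc, Complex.ofReal_sum]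
  have hnormalize : (mrpow Z α).trace⁻¹ • mrpow Z α = cfc (fun t ↦ c⁻¹ * t ^ α) Z := by
    rw [htrace, ← Complex.ofReal_inv, Complex.coe_smul, mrpow,
      cfc_const_mul _ _ _ (hspec.continuousOn _)]
  have hrpow : mrpow (cfc (fun t ↦ c⁻¹ * t ^ α) Z) ((α - 1) / α) =
      cfc (fun t ↦ (c⁻¹ * t ^ α) ^ ((α - 1) / α)) Z :=
    (cfc_comp' _ _ _ ((hspec.image _).continuousOn _) (hspec.continuousOn _) hZsa).symm
  have hmul : ∀ g : ℝ → ℝ, Z * cfc g Z = cfc (fun t ↦ t * g t) Z := fun g ↦ by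
    rw [cfc_mul _ _ _ (hspec.continuousOn _) (hspec.continuousOn _), cfc_id' ℝ Z hZsa]
  rw [hnormalize, hrpow, hmul, hZ.isHermitian.trace_cfc, htrace, ← Complex.ofReal_sum,
    Complex.ofReal_re, Complex.ofReal_re]
  exact sum_mul_normalized_rpow_rpow _ (fun i _ ↦ hZ.eigenvalues_nonneg i) hα

end PosSemidef

end Matrix

/-- Reverse Hölder duality: for `α ∈ [1/2, 1)` and positive definite `Z`, the infimum of
`Tr{Z τ^{(α-1)/α}}` over density matrices `τ > 0` equals `‖Z‖_α = (Tr{Z^α})^{1/α}`, and is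
attained at `τ = Z^α / Tr{Z^α}`. -/
theorem reverse_holder_duality (d : ℕ) (Z : Matrix (Fin d) (Fin d) ℂ) (hZ : Z.PosDef)
    (α : ℝ) (hα1 : 1/2 ≤ α) (hα2 : α < 1) :
    (∀ τ : Matrix (Fin d) (Fin d) ℂ, τ.PosDef → τ.trace = 1 →
        ((mrpow Z α).trace.re) ^ (1/α) ≤ (Z * mrpow τ ((α - 1) / α)).trace.re) ∧
      (Z * mrpow ((mrpow Z α).trace⁻¹ • mrpow Z α) ((α - 1) / α)).trace.re =
        ((mrpow Z α).trace.re) ^ (1/α) := by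
  have hα0 : 0 < α := by linarith
  exact ⟨fun τ hτ hτ1 ↦ hZ.posSemidef.rpow_trace_rpow_le_trace_mul_rpow hτ hτ1 hα0 hα2.le,
    hZ.posSemidef.trace_mul_normalized_rpow_rpow hα0.ne'⟩
end
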